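/- arXiv:1710.09395 — 6 statements merged into one kernel-verified Lean document; each statement's English description precedes it below -/
import Mathlib

section
/- Ky Fan's maximum principle: if X is a positive self-adjoint Hilbert–Schmidt (compact) operator on a separable Hilbert space with eigenvalues x_0 ≥ x_1 ≥ ... arranged in decreasing order, and P is an orthogonal projection of rank n+1, then Tr(P X) ≤ x_0 + x_1 + ... + x_n. -/
/-!
Expand each `φ i` in the eigenbasis: `re ⟪φ i, X φ i⟫ = ∑ₖ x k ‖⟪b k, φ i⟫‖²`. Summing over `i`,
the trace is `∑ₖ x k c k` with weights `c k = ∑ᵢ ‖⟪b k, φ i⟫‖²`, which lie in `[0, 1]` by Bessel's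
inequality and add up to `n + 1` by Parseval's identity. For a decreasing sequence `x`, such a
weighted sum is largest when the whole mass sits on the first `n + 1` indices.
-/

open Finset RCLike
open scoped InnerProductSpace

theorem Antitone.hasSum_mul_le_sum_range {x c : ℕ → ℝ} {m : ℕ} {S : ℝ} (hx : Antitone x)
    (hc₀ : ∀ k, 0 ≤ c k) (hc₁ : ∀ k, c k ≤ 1) (hc : HasSum c m)
    (hS : HasSum (fun k => x k * c k) S) : S ≤ ∑ k ∈ range m, x k := by
  set e : ℕ → ℝ := fun k => if k < m then 1 else 0
  have he_zero : ∀ k ∉ range m, e k = 0 := fun k hk => if_neg (by simpa using hk)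
  have he_one : ∀ k ∈ range m, e k = 1 := fun k hk => if_pos (mem_range.1 hk)
  have he : HasSum e m := by
    simpa [sum_congr rfl he_one] using hasSum_sum_of_ne_finset_zero he_zero
  have hxe : HasSum (fun k => x k * e k) (∑ k ∈ range m, x k) := by
    convert hasSum_sum_of_ne_finset_zero (L := .unconditional ℕ) (f := fun k => x k * e k)
      fun k hk => by simp [he_zero k hk] using 1
    exact sum_congr rfl fun k hk => by rw [he_one k hk, mul_one]
  -- Against the pivot `x m`, every term `(x k - x m) * (c k - e k)` is nonpositive, and these
  -- terms add up to `S - ∑ k ∈ range m, x k` because `c` and `e` both have total mass `m`.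
  have hterm : ∀ k, x k * c k - x m * c k - (x k * e k - x m * e k) ≤ 0 := by
    intro k
    rw [show x k * c k - x m * c k - (x k * e k - x m * e k) = (x k - x m) * (c k - e k) by ring]
    by_cases hk : k < m
    · simp only [e, if_pos hk]
      exact mul_nonpos_of_nonneg_of_nonpos (sub_nonneg.2 (hx hk.le)) (by linarith [hc₁ k])
    · simp only [e, if_neg hk, sub_zero]
      exact mul_nonpos_of_nonpos_of_nonneg (sub_nonpos.2 (hx (not_lt.1 hk))) (hc₀ k)
  have := hasSum_le hterm ((hS.sub (hc.mul_left (x m))).sub (hxe.sub (he.mul_left (x m))))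
    hasSum_zero
  linarith

section InnerProductSpace

variable {ι 𝕜 E : Type*} [RCLike 𝕜] [NormedAddCommGroup E] [InnerProductSpace 𝕜 E]

theorem inner_mul_inner_swap_eq_norm_sq (u v : E) :
    ⟪v, u⟫_𝕜 * ⟪u, v⟫_𝕜 = ((‖⟪u, v⟫_𝕜‖ ^ 2 : ℝ) : 𝕜) := by
  rw [← inner_conj_symm, RCLike.conj_mul]
  norm_cast

theorem HilbertBasis.hasSum_norm_sq_inner (b : HilbertBasis ι 𝕜 E) (v : E) :
    HasSum (fun i => ‖⟪b i, v⟫_𝕜‖ ^ 2) (‖v‖ ^ 2) := by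
  have := b.hasSum_inner_mul_inner v v
  simp only [inner_mul_inner_swap_eq_norm_sq, inner_self_eq_norm_sq_to_K] at this
  exact_mod_cast this

theorem HilbertBasis.hasSum_mul_norm_sq_inner_of_eigen (b : HilbertBasis ι 𝕜 E)
    {X : E →ₗ[𝕜] E} (hX : X.IsSymmetric) {x : ι → ℝ} (hb : ∀ i, X (b i) = (x i : 𝕜) • b i)
    (v : E) : HasSum (fun i => x i * ‖⟪b i, v⟫_𝕜‖ ^ 2) (re ⟪v, X v⟫_𝕜) := by
  have hXb : ∀ i, ⟪b i, X v⟫_𝕜 = x i * ⟪b i, v⟫_𝕜 := fun i => by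
    rw [← hX, hb, inner_smul_left, conj_ofReal]
  have := b.hasSum_inner_mul_inner v (X v)
  simp only [hXb, mul_left_comm _ (x _ : 𝕜), inner_mul_inner_swap_eq_norm_sq] at this
  simpa using hasSum_re _ this

end InnerProductSpace

theorem ky_fan_maximum_principle_general
    {H : Type*} [NormedAddCommGroup H] [InnerProductSpace ℂ H] [CompleteSpace H]
    (X : H →L[ℂ] H) (hXsa : IsSelfAdjoint X)
    (x : ℕ → ℝ) (hx_dec : Antitone x)
    (b : HilbertBasis ℕ ℂ H) (hb : ∀ k, X (b k) = (x k : ℂ) • b k)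
    (n : ℕ) (φ : Fin (n + 1) → H) (hφ : Orthonormal ℂ φ) :
    ∑ i, (inner ℂ (φ i) (X (φ i)) : ℂ).re ≤ ∑ k ∈ Finset.range (n + 1), x k := by
  have hweights : HasSum (fun k => ∑ i, ‖⟪b k, φ i⟫_ℂ‖ ^ 2) ((n + 1 : ℕ) : ℝ) := by
    simpa [hφ.1] using hasSum_sum fun i (_ : i ∈ univ) => b.hasSum_norm_sq_inner (φ i)
  have hweight_le_one (k : ℕ) : ∑ i, ‖⟪b k, φ i⟫_ℂ‖ ^ 2 ≤ 1 :=
    calc ∑ i, ‖⟪b k, φ i⟫_ℂ‖ ^ 2 = ∑ i, ‖⟪φ i, b k⟫_ℂ‖ ^ 2 := by simp only [norm_inner_symm]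
      _ ≤ ‖b k‖ ^ 2 := hφ.sum_inner_products_le (b k)
      _ = 1 := by simp [b.orthonormal.1 k]
  have htrace := hasSum_sum fun i (_ : i ∈ univ) =>
    b.hasSum_mul_norm_sq_inner_of_eigen hXsa.isSymmetric hb (φ i)
  simp only [← mul_sum] at htrace
  exact hx_dec.hasSum_mul_le_sum_range (fun k => by positivity) hweight_le_one hweights htrace

/-- Ky Fan's maximum principle: if `X` is a positive self-adjoint compact operator on a
separable Hilbert space, diagonalized by a Hilbert basis `b` with eigenvalues `x k`
arranged in decreasing order, and `φ` is an orthonormal family of `n+1` vectors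
(spanning the range of a rank-`(n+1)` orthogonal projection `P`), then
`Tr (P X) = ∑ i, ⟪φ i, X (φ i)⟫ ≤ x 0 + ⋯ + x n`. -/
theorem ky_fan_maximum_principle
    {H : Type*} [NormedAddCommGroup H] [InnerProductSpace ℂ H] [CompleteSpace H]
    (X : H →L[ℂ] H) (hXsa : IsSelfAdjoint X)
    (hXpos : ∀ v : H, 0 ≤ (inner ℂ v (X v) : ℂ).re)
    (x : ℕ → ℝ) (hx_nonneg : ∀ k, 0 ≤ x k) (hx_dec : Antitone x)
    (b : HilbertBasis ℕ ℂ H) (hb : ∀ k, X (b k) = (x k : ℂ) • b k)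
    (n : ℕ) (φ : Fin (n + 1) → H) (hφ : Orthonormal ℂ φ) :
    ∑ i, (inner ℂ (φ i) (X (φ i)) : ℂ).re ≤ ∑ k ∈ Finset.range (n + 1), x k :=
  ky_fan_maximum_principle_general X hXsa x hx_dec b hb n φ hφ
end

section
/- Truncation does not increase Shannon entropy of decreasing distributions: let p = (p_0, ..., p_N) be a probability distribution on {0,...,N} with p_0 ≥ p_1 ≥ ... ≥ p_N ≥ 0, fix 0 ≤ N' ≤ N, and define q_n = p_n / (p_0 + ... + p_{N'}) for n = 0,...,N'. Then the Shannon entropy H(q) = -∑ q_n ln q_n satisfies H(q) ≤ H(p). -/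
/-!
Let `S = ∑_{n ≤ N'} p n`, `ℓ = log (S / (N' + 1))`, and split `H(p) = A + B` into head and tail.
Then `H(q) = A / S + log S`. Jensen for the concave `negMulLog` gives `A ≤ -S ℓ`. As `p` is
decreasing, every tail value is at most the head average `S / (N' + 1)`, so `B ≥ -(1 - S) ℓ`.
Hence `(1 - S) A ≤ S B`, and `log S ≤ 0` finishes.
-/

open Real Finset

lemma sum_negMulLog_le_card_mul_negMulLog_average {ι : Type*} {s : Finset ι} {f : ι → ℝ}
    (hf : ∀ i ∈ s, 0 ≤ f i) :
    ∑ i ∈ s, negMulLog (f i) ≤ #s * negMulLog ((∑ i ∈ s, f i) / #s) := by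
  rcases s.eq_empty_or_nonempty with rfl | hs
  · simp
  have hcard : (0 : ℝ) < #s := by exact_mod_cast hs.card_pos
  have jensen := concaveOn_negMulLog.le_map_sum (t := s) (w := fun _ ↦ (#s : ℝ)⁻¹) (p := f)
    (fun _ _ ↦ by positivity) (by simp [hcard.ne']) (fun i hi ↦ Set.mem_Ici.2 (hf i hi))
  simp only [smul_eq_mul, ← mul_sum] at jensen
  rwa [inv_mul_eq_div, inv_mul_eq_div, div_le_iff₀' hcard] at jensen

lemma mul_log_le_mul_log_of_le {x y : ℝ} (hx : 0 ≤ x) (hxy : x ≤ y) :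
    x * log x ≤ x * log y := by
  rcases hx.eq_or_lt with rfl | hx
  · simp
  · exact mul_le_mul_of_nonneg_left (log_le_log hx hxy) hx.le

lemma sum_negMulLog_div_sum {ι : Type*} (s : Finset ι) (f : ι → ℝ) (hS : ∑ i ∈ s, f i ≠ 0) :
    ∑ i ∈ s, negMulLog (f i / ∑ j ∈ s, f j)
      = (∑ i ∈ s, negMulLog (f i)) / ∑ i ∈ s, f i + log (∑ i ∈ s, f i) := by
  simp only [div_eq_mul_inv, negMulLog_mul, sum_add_distrib, ← sum_mul, ← mul_sum]
  rw [negMulLog, log_inv]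
  field_simp

theorem sum_negMulLog_div_sum_le_of_le_average {ι : Type*} [DecidableEq ι] {s t : Finset ι}
    (hst : s ⊆ t) {f : ι → ℝ} (hf : ∀ i ∈ t, 0 ≤ f i) (h_sum : ∑ i ∈ t, f i = 1)
    (hS : 0 < ∑ i ∈ s, f i) (h_tail : ∀ i ∈ t \ s, #s * f i ≤ ∑ j ∈ s, f j) :
    ∑ i ∈ s, negMulLog (f i / ∑ j ∈ s, f j) ≤ ∑ i ∈ t, negMulLog (f i) := by
  set S := ∑ i ∈ s, f i
  set A := ∑ i ∈ s, negMulLog (f i)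
  set B := ∑ i ∈ t \ s, negMulLog (f i)
  set ℓ := log (S / #s)
  have hcard : (0 : ℝ) < #s := by
    exact_mod_cast card_pos.2 (nonempty_of_sum_ne_zero hS.ne')
  have h_tail_sum : ∑ i ∈ t \ s, f i = 1 - S := by
    rw [← h_sum, ← sum_sdiff hst]; ring
  have hS_le_one : S ≤ 1 := by
    linarith [sum_nonneg fun i (hi : i ∈ t \ s) ↦ hf i (sdiff_subset hi)]
  have hA : A ≤ -S * ℓ := by
    have jensen := sum_negMulLog_le_card_mul_negMulLog_average fun i hi ↦ hf i (hst hi)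
    rwa [negMulLog, ← mul_assoc, mul_neg, mul_div_cancel₀ _ hcard.ne'] at jensen
  have hB : -(1 - S) * ℓ ≤ B := by
    rw [← h_tail_sum, neg_mul, sum_mul, ← sum_neg_distrib]
    refine sum_le_sum fun i hi ↦ ?_
    rw [negMulLog, neg_mul, neg_le_neg_iff]
    exact mul_log_le_mul_log_of_le (hf i (sdiff_subset hi))
      ((le_div_iff₀' hcard).2 (h_tail i hi))
  rw [sum_negMulLog_div_sum s f hS.ne', ← sum_sdiff hst, div_add' _ _ _ hS.ne', div_le_iff₀ hS]
  linarith [mul_le_mul_of_nonneg_left hA (sub_nonneg.2 hS_le_one),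
    mul_le_mul_of_nonneg_left hB hS.le, mul_log_nonpos hS.le hS_le_one]

/-- Truncation does not increase the Shannon entropy of decreasing distributions:
if `p` is a decreasing probability distribution on `{0, …, N}` and `q` is its normalized
truncation to `{0, …, N'}` (with `N' ≤ N`), then `H(q) ≤ H(p)`. -/
theorem entropy_truncation_le
    (N N' : ℕ) (hN' : N' ≤ N) (p : ℕ → ℝ)
    (h_nonneg : ∀ n, n ≤ N → 0 ≤ p n)
    (h_dec : ∀ m n, m ≤ n → n ≤ N → p n ≤ p m)
    (h_sum : ∑ n ∈ Finset.range (N + 1), p n = 1) :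
    -∑ n ∈ Finset.range (N' + 1),
        (p n / ∑ k ∈ Finset.range (N' + 1), p k) *
          Real.log (p n / ∑ k ∈ Finset.range (N' + 1), p k)
      ≤ -∑ n ∈ Finset.range (N + 1), p n * Real.log (p n) := by
  have hst : range (N' + 1) ⊆ range (N + 1) := range_subset_range.2 (by omega)
  have hf : ∀ n ∈ range (N + 1), 0 ≤ p n := fun n hn ↦ h_nonneg n (by simp at hn; omega)
  have hp0 : 0 < p 0 := by
    by_contra! h
    have : ∑ n ∈ range (N + 1), p n ≤ 0 :=
      sum_nonpos fun n hn ↦ (h_dec 0 n n.zero_le (by simp at hn; omega)).trans h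
    linarith
  have hS : 0 < ∑ k ∈ range (N' + 1), p k :=
    hp0.trans_le (single_le_sum (fun n hn ↦ hf n (hst hn)) (by simp))
  have h_tail : ∀ n ∈ range (N + 1) \ range (N' + 1),
      #(range (N' + 1)) * p n ≤ ∑ k ∈ range (N' + 1), p k := by
    intro n hn
    simp only [mem_sdiff, mem_range] at hn
    rw [← nsmul_eq_mul, ← sum_const]
    exact sum_le_sum fun k hk ↦ h_dec k n (by simp at hk; omega) (by omega)
  have key := sum_negMulLog_div_sum_le_of_le_average hst hf h_sum hS h_tail
  simpa only [negMulLog, neg_mul, sum_neg_distrib] using key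
end

section
/- The function f(x) = g⁻¹(ln x) defined for x ≥ 1 satisfies f(x) = -1/2 + x/e + δ(x), where δ(x) = g⁻¹(ln x) - x/e + 1/2 satisfies 0 ≤ δ(x) ≤ δ(1) = 1/2 - 1/e for all x ≥ 1, δ is convex and decreasing, and δ(x) → 0 as x → ∞. -/
/-- The entropy function `g(N) = (N+1) log (N+1) - N log N` (with `g 0 = 0`). -/
noncomputable def gfun (N : ℝ) : ℝ := (N + 1) * Real.log (N + 1) - N * Real.log N

open Real Set Filter Topology

/-!
Write `N = g⁻¹(log x)`, so that `x = exp (g N)` and `δ x = N + 1/2 - exp (g N - 1)`. Since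
`g' N = log (N + 1) - log N` is the reciprocal of the logarithmic mean of `N` and `N + 1`,
everything follows from the mean inequalities `√(ab) ≤ (b - a) / (log b - log a) ≤ (a + b) / 2`.
Applied to `g N - log (N + 1/2)`, split into two logarithmic differences, they give
`g N ≤ 1 + log (N + 1/2) ≤ g N + O(N⁻²)`, hence `0 ≤ δ` and `δ → 0`. They also give
`g'² + g'' ≤ 0`, i.e. `exp ∘ g` is concave, hence `δ` is convex. So the derivative
`exp (g N) g' N` of `exp ∘ g` decreases; being bounded below by `e (1 - 1 / (2N + 1))`, it is
at least `e`, which makes `N ↦ exp (g N - 1) - N` increasing and `δ` decreasing.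
-/

theorem two_mul_log_sub_log_le_div_sub_div {a b : ℝ} (ha : 0 < a) (hab : a ≤ b) :
    2 * (log b - log a) ≤ b / a - a / b := by
  have hf : ∀ x ∈ Ioi 0, HasDerivAt (fun x => x / a - a / x - 2 * (log x - log a))
      ((x - a) ^ 2 / (a * x ^ 2)) x := fun x (hx : 0 < x) =>
    ((((hasDerivAt_id' x).div_const a).fun_sub ((hasDerivAt_const x a).div (hasDerivAt_id' x)
      hx.ne')).fun_sub (((hasDerivAt_log hx.ne').sub_const (log a)).const_mul 2)).congr_deriv
      (by field_simp; ring)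
  have hmono := monotoneOn_of_hasDerivWithinAt_nonneg (convex_Ici a)
    (fun x hx => (hf x (ha.trans_le hx)).continuousAt.continuousWithinAt)
    (fun x hx => (hf x (ha.trans_le (interior_subset hx))).hasDerivWithinAt)
    (fun x _ => by positivity) self_mem_Ici hab hab
  simp only [ne_eq, ha.ne', not_false_eq_true, div_self, sub_self, mul_zero, sub_nonneg] at hmono
  linarith

theorem two_mul_sub_div_add_le_log_sub_log {a b : ℝ} (ha : 0 < a) (hab : a ≤ b) :
    2 * (b - a) / (b + a) ≤ log b - log a := by
  have hf : ∀ x ∈ Ioi 0, HasDerivAt (fun x => log x - log a - 2 * (x - a) / (x + a))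
      ((x - a) ^ 2 / (x * (x + a) ^ 2)) x := fun x (hx : 0 < x) =>
    (((hasDerivAt_log hx.ne').sub_const (log a)).fun_sub
      ((((hasDerivAt_id' x).sub_const a).const_mul 2).fun_div ((hasDerivAt_id' x).add_const a)
        (by positivity))).congr_deriv (by field_simp; ring)
  have hmono := monotoneOn_of_hasDerivWithinAt_nonneg (convex_Ici a)
    (fun x hx => (hf x (ha.trans_le hx)).continuousAt.continuousWithinAt)
    (fun x hx => (hf x (ha.trans_le (interior_subset hx))).hasDerivWithinAt)
    (fun x hx => by have := ha.trans_le (interior_subset hx); positivity) self_mem_Ici hab hab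
  simp only [sub_self, mul_zero, zero_div, sub_nonneg] at hmono
  linarith

theorem AntitoneOn.le_of_tendsto_of_forall_le {f g : ℝ → ℝ} {a c : ℝ}
    (hf : AntitoneOn f (Ioi a)) (hg : Tendsto g atTop (𝓝 c)) (hgf : ∀ x ∈ Ioi a, g x ≤ f x)
    {x : ℝ} (hx : x ∈ Ioi a) : c ≤ f x := by
  refine le_of_tendsto hg ?_
  filter_upwards [eventually_ge_atTop x] with y hxy
  have hy : y ∈ Ioi a := lt_of_lt_of_le hx hxy
  exact (hgf y hy).trans (hf hx hy hxy)

theorem two_div_le_log_add_one_sub_log {N : ℝ} (hN : 0 < N) :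
    2 / (2 * N + 1) ≤ log (N + 1) - log N := by
  have h := two_mul_sub_div_add_le_log_sub_log hN (le_add_of_nonneg_right zero_le_one)
  rwa [add_sub_cancel_left, mul_one, show N + 1 + N = 2 * N + 1 by ring] at h

theorem sq_log_add_one_sub_log_le {N : ℝ} (hN : 0 < N) :
    (log (N + 1) - log N) ^ 2 ≤ 1 / (N * (N + 1)) := by
  have hN1 : 0 < N + 1 := by linarith
  have h := two_mul_log_sub_log_le_div_sub_div (sqrt_pos.2 hN)
    (sqrt_le_sqrt (le_add_of_nonneg_right zero_le_one))
  have hL : 0 ≤ log (N + 1) - log N := sub_nonneg.2 (log_le_log hN (by linarith))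
  rw [log_sqrt hN.le, log_sqrt hN1.le] at h
  have hrhs : (√(N + 1) / √N - √N / √(N + 1)) ^ 2 = 1 / (N * (N + 1)) := by
    field_simp
    rw [sq_sqrt hN.le, sq_sqrt hN1.le]
    ring
  calc (log (N + 1) - log N) ^ 2 ≤ (√(N + 1) / √N - √N / √(N + 1)) ^ 2 :=
        pow_le_pow_left₀ hL (by linarith) 2
    _ = 1 / (N * (N + 1)) := hrhs

theorem hasDerivAt_gfun {N : ℝ} (hN : 0 < N) : HasDerivAt gfun (log (N + 1) - log N) N := by
  have h1 := (hasDerivAt_id' N).add_const 1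
  exact ((h1.mul (h1.log (by positivity))).sub ((hasDerivAt_id' N).mul
    (hasDerivAt_log hN.ne'))).congr_deriv (by field_simp; ring)

theorem continuous_gfun : Continuous gfun :=
  (continuous_mul_log.comp (continuous_add_const 1)).sub continuous_mul_log

theorem strictMonoOn_gfun : StrictMonoOn gfun (Ici 0) :=
  strictMonoOn_of_hasDerivWithinAt_pos (convex_Ici 0) continuous_gfun.continuousOn
    (fun _ hN => (hasDerivAt_gfun (interior_Ici.subset hN)).hasDerivWithinAt)
    (fun N hN => sub_pos.2 (log_lt_log (interior_Ici.subset hN) (lt_add_one N)))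

theorem gfun_le_one_add_log {N : ℝ} (hN : 0 ≤ N) : gfun N ≤ 1 + log (N + 1 / 2) := by
  rcases hN.eq_or_lt with rfl | hN
  · simp only [gfun, zero_add, one_mul, log_one, zero_mul, sub_zero, one_div, log_inv]
    linarith [log_le_sub_one_of_pos two_pos]
  have h1 := two_mul_log_sub_log_le_div_sub_div (a := N + 1 / 2) (b := N + 1) (by positivity)
    (by linarith)
  have h2 := two_mul_log_sub_log_le_div_sub_div (a := N) (b := N + 1 / 2) hN (by linarith)
  calc gfun N = log (N + 1 / 2) + (N + 1) * (log (N + 1) - log (N + 1 / 2))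
        + N * (log (N + 1 / 2) - log N) := by unfold gfun; ring
    _ ≤ log (N + 1 / 2) + (N + 1) * (((N + 1) / (N + 1 / 2) - (N + 1 / 2) / (N + 1)) / 2)
        + N * (((N + 1 / 2) / N - N / (N + 1 / 2)) / 2) := by gcongr <;> linarith
    _ = 1 + log (N + 1 / 2) := by field_simp; ring

theorem one_add_log_sub_le_gfun {N : ℝ} (hN : 0 < N) :
    1 + log (N + 1 / 2) - 1 / ((4 * N + 1) * (4 * N + 3)) ≤ gfun N := by
  have h1 := two_mul_sub_div_add_le_log_sub_log (a := N + 1 / 2) (b := N + 1) (by positivity)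
    (by linarith)
  have h2 := two_mul_sub_div_add_le_log_sub_log (a := N) (b := N + 1 / 2) hN (by linarith)
  calc 1 + log (N + 1 / 2) - 1 / ((4 * N + 1) * (4 * N + 3))
      = log (N + 1 / 2) + (N + 1) * (2 * (N + 1 - (N + 1 / 2)) / (N + 1 + (N + 1 / 2)))
        + N * (2 * (N + 1 / 2 - N) / (N + 1 / 2 + N)) := by field_simp; ring
    _ ≤ log (N + 1 / 2) + (N + 1) * (log (N + 1) - log (N + 1 / 2))
        + N * (log (N + 1 / 2) - log N) := by gcongr
    _ = gfun N := by unfold gfun; ring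

theorem exp_gfun_div_exp_one_le {N : ℝ} (hN : 0 ≤ N) : exp (gfun N) / exp 1 ≤ N + 1 / 2 :=
  calc exp (gfun N) / exp 1 = exp (gfun N - 1) := (exp_sub _ _).symm
    _ ≤ exp (log (N + 1 / 2)) := exp_le_exp.2 (by linarith [gfun_le_one_add_log hN])
    _ = N + 1 / 2 := exp_log (by positivity)

theorem add_half_sub_exp_gfun_div_exp_one_le {N : ℝ} (hN : 0 < N) :
    N + 1 / 2 - exp (gfun N) / exp 1 ≤ N⁻¹ := by
  set p := 1 / ((4 * N + 1) * (4 * N + 3))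
  have hlower : (N + 1 / 2) * (1 - p) ≤ exp (gfun N) / exp 1 :=
    calc (N + 1 / 2) * (1 - p) ≤ exp (log (N + 1 / 2)) * exp (-p) := by
          rw [exp_log (by positivity)]
          gcongr
          linarith [add_one_le_exp (-p)]
      _ = exp (1 + log (N + 1 / 2) - p - 1) := by rw [← exp_add]; ring_nf
      _ ≤ exp (gfun N - 1) := by gcongr; exact one_add_log_sub_le_gfun hN
      _ = exp (gfun N) / exp 1 := exp_sub _ _
  have hp : (N + 1 / 2) * p ≤ N⁻¹ := by
    rw [mul_one_div, div_le_iff₀ (by positivity)]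
    field_simp
    nlinarith
  linarith

theorem tendsto_add_half_sub_exp_gfun_div_exp_one :
    Tendsto (fun N => N + 1 / 2 - exp (gfun N) / exp 1) atTop (𝓝 0) :=
  tendsto_of_tendsto_of_tendsto_of_le_of_le' tendsto_const_nhds tendsto_inv_atTop_zero
    ((eventually_ge_atTop 0).mono fun _ hN => sub_nonneg.2 (exp_gfun_div_exp_one_le hN))
    ((eventually_gt_atTop 0).mono fun _ hN => add_half_sub_exp_gfun_div_exp_one_le hN)

theorem hasDerivAt_exp_gfun {N : ℝ} (hN : 0 < N) :
    HasDerivAt (fun N => exp (gfun N)) (exp (gfun N) * (log (N + 1) - log N)) N :=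
  (hasDerivAt_gfun hN).exp

theorem hasDerivAt_exp_gfun_mul {N : ℝ} (hN : 0 < N) :
    HasDerivAt (fun N => exp (gfun N) * (log (N + 1) - log N))
      (exp (gfun N) * ((log (N + 1) - log N) ^ 2 - 1 / (N * (N + 1)))) N :=
  ((hasDerivAt_exp_gfun hN).mul ((((hasDerivAt_id' N).add_const 1).log (by positivity)).fun_sub
    (hasDerivAt_log hN.ne'))).congr_deriv (by field_simp; ring)

theorem antitoneOn_exp_gfun_mul :
    AntitoneOn (fun N => exp (gfun N) * (log (N + 1) - log N)) (Ioi 0) :=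
  antitoneOn_of_hasDerivWithinAt_nonpos (convex_Ioi 0)
    (fun _ hN => (hasDerivAt_exp_gfun_mul hN).continuousAt.continuousWithinAt)
    (fun _ hN => (hasDerivAt_exp_gfun_mul (interior_subset hN)).hasDerivWithinAt)
    (fun _ hN => mul_nonpos_of_nonneg_of_nonpos (exp_pos _).le
      (sub_nonpos.2 (sq_log_add_one_sub_log_le (interior_subset hN))))

theorem concaveOn_exp_gfun : ConcaveOn ℝ (Ici 0) (fun N => exp (gfun N)) := by
  refine AntitoneOn.concaveOn_of_deriv (convex_Ici 0)
    (continuous_exp.comp continuous_gfun).continuousOn (fun _ hN =>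
      (hasDerivAt_exp_gfun (interior_Ici.subset hN)).differentiableAt.differentiableWithinAt) ?_
  rw [interior_Ici]
  exact antitoneOn_exp_gfun_mul.congr fun _ hN => (hasDerivAt_exp_gfun hN).deriv.symm

theorem exp_one_le_exp_gfun_mul {N : ℝ} (hN : 0 < N) :
    exp 1 ≤ exp (gfun N) * (log (N + 1) - log N) := by
  refine antitoneOn_exp_gfun_mul.le_of_tendsto_of_forall_le
    (g := fun N => exp 1 * (1 - 1 / (2 * N + 1))) ?_ (fun N (hN : 0 < N) => ?_) hN
  · have : Tendsto (fun N : ℝ => 1 / (2 * N + 1)) atTop (𝓝 0) :=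
      tendsto_const_nhds.div_atTop
        (tendsto_atTop_add_const_right _ 1 (tendsto_id.const_mul_atTop two_pos))
    simpa using ((tendsto_const_nhds (x := (1 : ℝ))).sub this).const_mul (exp 1)
  have hL := two_div_le_log_add_one_sub_log hN
  have hg : 1 + log N ≤ gfun N :=
    calc 1 + log N ≤ (N + 1) * (2 / (2 * N + 1)) + log N := by
          gcongr
          rw [mul_div_assoc', le_div_iff₀ (by positivity)]
          linarith
      _ ≤ (N + 1) * (log (N + 1) - log N) + log N := by gcongr
      _ = gfun N := by unfold gfun; ring
  calc exp 1 * (1 - 1 / (2 * N + 1)) = exp (1 + log N) * (2 / (2 * N + 1)) := by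
        rw [exp_add, exp_log hN]; field_simp; ring
    _ ≤ exp (gfun N) * (log (N + 1) - log N) := by gcongr

theorem monotoneOn_exp_gfun_div_exp_one_sub :
    MonotoneOn (fun N => exp (gfun N) / exp 1 - N) (Ici 0) :=
  monotoneOn_of_hasDerivWithinAt_nonneg (convex_Ici 0)
    (((continuous_exp.comp continuous_gfun).div_const _).sub continuous_id).continuousOn
    (fun _ hN => (((hasDerivAt_exp_gfun (interior_Ici.subset hN)).div_const (exp 1)).sub
      (hasDerivAt_id' _)).hasDerivWithinAt)
    (fun _ hN => sub_nonneg.2 ((le_div_iff₀ (exp_pos 1)).2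
      (by simpa using exp_one_le_exp_gfun_mul (interior_Ici.subset hN))))

noncomputable def delta (ginv : ℝ → ℝ) (x : ℝ) : ℝ := ginv (log x) - x / exp 1 + 1 / 2

section Inverse

variable {ginv : ℝ → ℝ}

theorem exp_gfun_ginv_log (hginv : ∀ S : ℝ, 0 ≤ S → 0 ≤ ginv S ∧ gfun (ginv S) = S)
    {x : ℝ} (hx : 1 ≤ x) : exp (gfun (ginv (log x))) = x := by
  rw [(hginv _ (log_nonneg hx)).2, exp_log (by linarith)]

theorem ginv_log_le_iff (hginv : ∀ S : ℝ, 0 ≤ S → 0 ≤ ginv S ∧ gfun (ginv S) = S)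
    {x M : ℝ} (hx : 1 ≤ x) (hM : 0 ≤ M) : ginv (log x) ≤ M ↔ x ≤ exp (gfun M) := by
  rw [← strictMonoOn_gfun.le_iff_le (hginv _ (log_nonneg hx)).1 hM, (hginv _ (log_nonneg hx)).2,
    log_le_iff_le_exp (by linarith)]

theorem monotoneOn_ginv_log (hginv : ∀ S : ℝ, 0 ≤ S → 0 ≤ ginv S ∧ gfun (ginv S) = S) :
    MonotoneOn (fun x => ginv (log x)) (Ici 1) := fun _ hx _ hy hxy =>
  (ginv_log_le_iff hginv hx (hginv _ (log_nonneg hy)).1).2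
    (hxy.trans_eq (exp_gfun_ginv_log hginv hy).symm)

theorem delta_eq (hginv : ∀ S : ℝ, 0 ≤ S → 0 ≤ ginv S ∧ gfun (ginv S) = S)
    {x : ℝ} (hx : 1 ≤ x) :
    delta ginv x = ginv (log x) + 1 / 2 - exp (gfun (ginv (log x))) / exp 1 := by
  rw [delta, exp_gfun_ginv_log hginv hx]
  ring

theorem delta_nonneg (hginv : ∀ S : ℝ, 0 ≤ S → 0 ≤ ginv S ∧ gfun (ginv S) = S)
    {x : ℝ} (hx : 1 ≤ x) : 0 ≤ delta ginv x := by
  rw [delta_eq hginv hx]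
  linarith [exp_gfun_div_exp_one_le (hginv _ (log_nonneg hx)).1]

theorem delta_one (hginv : ∀ S : ℝ, 0 ≤ S → 0 ≤ ginv S ∧ gfun (ginv S) = S) :
    delta ginv 1 = 1 / 2 - 1 / exp 1 := by
  have h : ginv (log 1) = 0 :=
    le_antisymm ((ginv_log_le_iff hginv le_rfl le_rfl).2 (by simp [gfun]))
      (hginv _ (log_nonneg le_rfl)).1
  rw [delta, h]
  ring

theorem antitoneOn_delta (hginv : ∀ S : ℝ, 0 ≤ S → 0 ≤ ginv S ∧ gfun (ginv S) = S) :
    AntitoneOn (delta ginv) (Ici 1) := by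
  intro x hx y hy hxy
  have h := monotoneOn_exp_gfun_div_exp_one_sub (hginv _ (log_nonneg hx)).1
    (hginv _ (log_nonneg hy)).1 (monotoneOn_ginv_log hginv hx hy hxy)
  rw [delta_eq hginv hx, delta_eq hginv hy]
  linarith

theorem convexOn_delta (hginv : ∀ S : ℝ, 0 ≤ S → 0 ≤ ginv S ∧ gfun (ginv S) = S) :
    ConvexOn ℝ (Ici 1) (delta ginv) := by
  refine ⟨convex_Ici 1, fun x (hx : 1 ≤ x) y (hy : 1 ≤ y) a b ha hb hab => ?_⟩
  have hN := (hginv _ (log_nonneg hx)).1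
  have hM := (hginv _ (log_nonneg hy)).1
  have hz : 1 ≤ a • x + b • y := convex_Ici (1 : ℝ) hx hy ha hb hab
  have key : ginv (log (a • x + b • y)) ≤ a • ginv (log x) + b • ginv (log y) := by
    rw [ginv_log_le_iff hginv hz (by positivity)]
    calc a • x + b • y
        = a • exp (gfun (ginv (log x))) + b • exp (gfun (ginv (log y))) := by
          rw [exp_gfun_ginv_log hginv hx, exp_gfun_ginv_log hginv hy]
      _ ≤ exp (gfun (a • ginv (log x) + b • ginv (log y))) :=
          concaveOn_exp_gfun.2 hN hM ha hb hab
  simp only [delta, smul_eq_mul] at key ⊢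
  linear_combination key - hab / 2

theorem tendsto_delta (hginv : ∀ S : ℝ, 0 ≤ S → 0 ≤ ginv S ∧ gfun (ginv S) = S) :
    Tendsto (delta ginv) atTop (𝓝 0) := by
  have hN : Tendsto (fun x => ginv (log x)) atTop atTop := by
    refine tendsto_atTop_mono' _ ?_ (tendsto_atTop_add_const_right _ (-1 / 2)
      (tendsto_id.atTop_div_const (exp_pos 1)))
    filter_upwards [eventually_ge_atTop 1] with x hx
    have h := exp_gfun_div_exp_one_le (hginv _ (log_nonneg hx)).1
    rw [exp_gfun_ginv_log hginv hx] at h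
    simp only [id]
    linarith
  refine (tendsto_add_half_sub_exp_gfun_div_exp_one.comp hN).congr' ?_
  filter_upwards [eventually_ge_atTop 1] with x hx
  exact (delta_eq hginv hx).symm

end Inverse

theorem delta_properties_general
    (ginv : ℝ → ℝ)
    (hginv_right : ∀ S : ℝ, 0 ≤ S → 0 ≤ ginv S ∧ gfun (ginv S) = S) :
    ∀ δ : ℝ → ℝ, (∀ x : ℝ, δ x = ginv (Real.log x) - x / Real.exp 1 + 1 / 2) →
      ((∀ x : ℝ, 1 ≤ x → ginv (Real.log x) = -(1 / 2) + x / Real.exp 1 + δ x) ∧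
       (∀ x : ℝ, 1 ≤ x → 0 ≤ δ x ∧ δ x ≤ δ 1) ∧
       δ 1 = 1 / 2 - 1 / Real.exp 1 ∧
       ConvexOn ℝ (Set.Ici 1) δ ∧
       AntitoneOn δ (Set.Ici 1) ∧
       Filter.Tendsto δ Filter.atTop (nhds 0)) := by
  intro δ hδ
  obtain rfl : δ = delta ginv := funext hδ
  refine ⟨fun x _ => by rw [delta]; ring, fun x hx => ⟨delta_nonneg hginv_right hx, ?_⟩,
    delta_one hginv_right, convexOn_delta hginv_right, antitoneOn_delta hginv_right,
    tendsto_delta hginv_right⟩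
  exact antitoneOn_delta hginv_right self_mem_Ici hx hx

/-- Properties of `δ(x) = g⁻¹(log x) - x/e + 1/2` on `[1,∞)`: writing
`f(x) = g⁻¹(log x) = -1/2 + x/e + δ(x)`, one has `0 ≤ δ(x) ≤ δ(1) = 1/2 - 1/e`,
`δ` is convex and decreasing on `[1,∞)`, and `δ(x) → 0` as `x → ∞`. -/
theorem delta_properties
    (ginv : ℝ → ℝ)
    (hginv_left : ∀ N : ℝ, 0 ≤ N → ginv (gfun N) = N)
    (hginv_right : ∀ S : ℝ, 0 ≤ S → 0 ≤ ginv S ∧ gfun (ginv S) = S) :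
    ∀ δ : ℝ → ℝ, (∀ x : ℝ, δ x = ginv (Real.log x) - x / Real.exp 1 + 1 / 2) →
      ((∀ x : ℝ, 1 ≤ x → ginv (Real.log x) = -(1 / 2) + x / Real.exp 1 + δ x) ∧
       (∀ x : ℝ, 1 ≤ x → 0 ≤ δ x ∧ δ x ≤ δ 1) ∧
       δ 1 = 1 / 2 - 1 / Real.exp 1 ∧
       ConvexOn ℝ (Set.Ici 1) δ ∧
       AntitoneOn δ (Set.Ici 1) ∧
       Filter.Tendsto δ Filter.atTop (nhds 0)) :=
  delta_properties_general ginv hginv_right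
end

section
/- One-mode positivity condition: for a 2×2 real matrix K and a 2×2 real symmetric positive semidefinite matrix α, the condition det(K σ Kᵀ + α) ≥ 1 holds for every real symmetric positive semidefinite 2×2 matrix σ with det σ ≥ 1 if and only if √(det α) ≥ 1 - |det K|. -/
/-!
For `2 × 2` matrices `det (A + B) = det A + det B + tr (adj A * B)`, and for positive semidefinite
`A`, `B` the mixed term is at least `2 √(det A det B)`: this is Minkowski's inequality, which gives
`√det (K σ Kᵀ + α) ≥ |det K| √det σ + √det α ≥ 1` when `√det α ≥ 1 - |det K|`.

Conversely, with `P = Kᵀ adj α K` one has `det (K σ Kᵀ + α) = det K ^ 2 det σ + det α + tr (P σ)`,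
and on `det σ = 1` the trace `tr (P σ)` comes arbitrarily close to `2 √det P = 2 |det K| √det α`
(take `σ` proportional to `(P + ε)⁻¹`). So the infimum of `det (K σ Kᵀ + α)` is
`(|det K| + √det α) ^ 2`.
-/

open Matrix Filter Topology

namespace Matrix

section CommRing

variable {R : Type*} [CommRing R]

theorem trace_adjugate_mul_fin_two (A B : Matrix (Fin 2) (Fin 2) R) :
    (A.adjugate * B).trace = A 1 1 * B 0 0 - A 0 1 * B 1 0 - A 1 0 * B 0 1 + A 0 0 * B 1 1 := by
  simp only [adjugate_fin_two, cons_mul, empty_mul, Equiv.symm_apply_apply, trace_fin_two, of_apply,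
    cons_val', vecMul, dotProduct, Fin.sum_univ_two, cons_val_zero, cons_val_one, cons_val_fin_one,
    neg_mul]
  ring

theorem det_add_fin_two (A B : Matrix (Fin 2) (Fin 2) R) :
    (A + B).det = A.det + B.det + (A.adjugate * B).trace := by
  rw [trace_adjugate_mul_fin_two, det_fin_two, det_fin_two, det_fin_two]
  simp only [add_apply]
  ring

theorem trace_mul_mul_mul_transpose {n : Type*} [Fintype n] (M K σ : Matrix n n R) :
    (M * (K * σ * Kᵀ)).trace = (Kᵀ * M * K * σ).trace := by
  rw [← Matrix.mul_assoc, trace_mul_comm]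
  simp only [Matrix.mul_assoc]

end CommRing

/-- `adj A = J Aᵀ Jᴴ`, with `J` the rotation by a right angle. -/
theorem PosSemidef.adjugate_fin_two {R : Type*} [CommRing R] [PartialOrder R] [StarRing R]
    {A : Matrix (Fin 2) (Fin 2) R} (hA : A.PosSemidef) : A.adjugate.PosSemidef := by
  convert hA.transpose.mul_mul_conjTranspose_same !![0, 1; -1, 0] using 1
  rw [Matrix.adjugate_fin_two]
  ext i j
  fin_cases i <;> fin_cases j <;> simp [mul_apply, vecMul, dotProduct, Fin.sum_univ_two]

variable {A B : Matrix (Fin 2) (Fin 2) ℝ}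

theorem four_mul_det_mul_det_le_trace_adjugate_mul_sq (hA : A.IsHermitian) (hB : B.PosSemidef) :
    4 * (A.det * B.det) ≤ (A.adjugate * B).trace ^ 2 := by
  have hA10 : A 1 0 = A 0 1 := by simpa using hA.apply 0 1
  have hB10 : B 1 0 = B 0 1 := by simpa using hB.isHermitian.apply 0 1
  have hBdet := hB.det_nonneg
  rw [det_fin_two, hB10] at hBdet
  rw [trace_adjugate_mul_fin_two, det_fin_two, det_fin_two, hA10, hB10]
  rcases hB.diag_nonneg (i := 0) |>.eq_or_lt with hB00 | hB00
  · have hB01 : B 0 1 = 0 := by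
      rw [← hB00, zero_mul, zero_sub, neg_nonneg] at hBdet
      exact mul_self_eq_zero.1 (le_antisymm hBdet (mul_self_nonneg _))
    rw [← hB00, hB01]
    nlinarith
  · have hsos : B 0 0 ^ 2 * ((A 1 1 * B 0 0 - A 0 1 * B 0 1 - A 0 1 * B 0 1 + A 0 0 * B 1 1) ^ 2
        - 4 * ((A 0 0 * A 1 1 - A 0 1 * A 0 1) * (B 0 0 * B 1 1 - B 0 1 * B 0 1))) =
        (B 0 0 * (A 1 1 * B 0 0 - A 0 0 * B 1 1) + 2 * B 0 1 * (A 0 0 * B 0 1 - A 0 1 * B 0 0)) ^ 2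
        + 4 * (B 0 0 * B 1 1 - B 0 1 * B 0 1) * (A 0 0 * B 0 1 - A 0 1 * B 0 0) ^ 2 := by
      ring
    have : 0 ≤ B 0 0 ^ 2 * ((A 1 1 * B 0 0 - A 0 1 * B 0 1 - A 0 1 * B 0 1 + A 0 0 * B 1 1) ^ 2
        - 4 * ((A 0 0 * A 1 1 - A 0 1 * A 0 1) * (B 0 0 * B 1 1 - B 0 1 * B 0 1))) := by
      rw [hsos]
      positivity
    nlinarith [(mul_nonneg_iff_of_pos_left (by positivity : 0 < B 0 0 ^ 2)).1 this]

theorem trace_adjugate_mul_nonneg (hA : A.PosSemidef) (hB : B.PosSemidef) :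
    0 ≤ (A.adjugate * B).trace := by
  have hA10 : A 1 0 = A 0 1 := by simpa using hA.isHermitian.apply 0 1
  have hB10 : B 1 0 = B 0 1 := by simpa using hB.isHermitian.apply 0 1
  have hAdet := hA.det_nonneg
  have hBdet := hB.det_nonneg
  rw [det_fin_two, hA10] at hAdet
  rw [det_fin_two, hB10] at hBdet
  rw [trace_adjugate_mul_fin_two, hA10, hB10]
  nlinarith [mul_nonneg (hA.diag_nonneg (i := 0)) (hB.diag_nonneg (i := 1)),
    mul_nonneg (hA.diag_nonneg (i := 1)) (hB.diag_nonneg (i := 0)), mul_le_mul hAdet hBdet,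
    sq_nonneg (A 1 1 * B 0 0 - A 0 0 * B 1 1), sq_abs (A 0 1 * B 0 1),
    abs_nonneg (A 0 1 * B 0 1)]

theorem two_mul_sqrt_det_mul_det_le_trace_adjugate_mul (hA : A.PosSemidef) (hB : B.PosSemidef) :
    2 * √(A.det * B.det) ≤ (A.adjugate * B).trace := by
  rw [← Real.sqrt_sq (trace_adjugate_mul_nonneg hA hB), ← Real.sqrt_sq zero_le_two,
    ← Real.sqrt_mul (sq_nonneg 2)]
  refine Real.sqrt_le_sqrt ?_
  linarith [four_mul_det_mul_det_le_trace_adjugate_mul_sq hA.isHermitian hB]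

theorem sqrt_det_add_sqrt_det_le_sqrt_det_add (hA : A.PosSemidef) (hB : B.PosSemidef) :
    √A.det + √B.det ≤ √(A + B).det := by
  refine Real.le_sqrt_of_sq_le ?_
  have := two_mul_sqrt_det_mul_det_le_trace_adjugate_mul hA hB
  rw [Real.sqrt_mul hA.det_nonneg] at this
  rw [det_add_fin_two, add_sq, Real.sq_sqrt hA.det_nonneg, Real.sq_sqrt hB.det_nonneg]
  linarith

theorem PosSemidef.exists_posSemidef_det_eq_one_trace_mul_lt {P : Matrix (Fin 2) (Fin 2) ℝ}
    (hP : P.PosSemidef) {c : ℝ} (hc : 2 * √P.det < c) :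
    ∃ σ : Matrix (Fin 2) (Fin 2) ℝ, σ.PosSemidef ∧ σ.det = 1 ∧ (P * σ).trace < c := by
  have hc₀ : 0 < c / 2 := by linarith [Real.sqrt_nonneg P.det]
  have hdet : ∀ᶠ ε in 𝓝[>] (0 : ℝ), (P + ε • 1).det < (c / 2) ^ 2 := by
    refine nhdsWithin_le_nhds (ContinuousAt.eventually_lt (by fun_prop) continuousAt_const ?_)
    rw [zero_smul, add_zero, ← Real.sqrt_lt' hc₀]
    linarith
  obtain ⟨ε, hεc, hε⟩ := (hdet.and self_mem_nhdsWithin).exists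
  set Q := P + ε • 1
  have hQ : Q.PosDef := (PosDef.one.smul hε).posSemidef_add hP
  refine ⟨√Q.det • Q⁻¹, hQ.inv.posSemidef.smul (Real.sqrt_nonneg _), ?_, ?_⟩
  · rw [det_smul, det_nonsing_inv, Ring.inverse_eq_inv', Fintype.card_fin,
      Real.sq_sqrt hQ.det_pos.le, mul_inv_cancel₀ hQ.det_pos.ne']
  · have hPQ : (P * Q⁻¹).trace ≤ 2 := by
      have : P * Q⁻¹ = 1 - ε • Q⁻¹ := by
        rw [show P = Q - ε • 1 by simp [Q], sub_mul, mul_nonsing_inv _ hQ.det_pos.ne'.isUnit,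
          smul_mul, one_mul]
      rw [this, trace_sub, trace_one, trace_smul, Fintype.card_fin, Nat.cast_ofNat, smul_eq_mul]
      linarith [mul_nonneg hε.le hQ.inv.posSemidef.trace_nonneg]
    have hQc : √Q.det < c / 2 := (Real.sqrt_lt' hc₀).2 hεc
    rw [mul_smul_comm, trace_smul, smul_eq_mul]
    nlinarith [Real.sqrt_nonneg Q.det]

end Matrix

/-- One-mode positivity condition: for a real `2×2` matrix `K` and a real symmetric positive
semidefinite `2×2` matrix `α`, one has `det (K σ Kᵀ + α) ≥ 1` for every positive semidefinite
`σ` with `det σ ≥ 1` if and only if `√(det α) ≥ 1 - |det K|`. -/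
theorem one_mode_positivity_condition
    (K α : Matrix (Fin 2) (Fin 2) ℝ) (hα : α.PosSemidef) :
    (∀ σ : Matrix (Fin 2) (Fin 2) ℝ, σ.PosSemidef → 1 ≤ σ.det →
        1 ≤ (K * σ * K.transpose + α).det) ↔
      1 - |K.det| ≤ Real.sqrt α.det := by
  have hdet_conj (σ : Matrix (Fin 2) (Fin 2) ℝ) : (K * σ * Kᵀ).det = |K.det| ^ 2 * σ.det := by
    rw [det_mul, det_mul, det_transpose, sq_abs]
    ring
  constructor
  · intro h
    by_contra! hlt
    have hP : (Kᵀ * α.adjugate * K).PosSemidef := by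
      simpa using hα.adjugate_fin_two.conjTranspose_mul_mul_same K
    have hPdet : √(Kᵀ * α.adjugate * K).det = |K.det| * √α.det := by
      rw [det_mul, det_mul, det_transpose, det_adjugate, Fintype.card_fin, pow_one,
        mul_right_comm, ← sq, Real.sqrt_mul (sq_nonneg _), Real.sqrt_sq_eq_abs]
    obtain ⟨σ, hσ, hσ1, htr⟩ := hP.exists_posSemidef_det_eq_one_trace_mul_lt
      (c := 1 - |K.det| ^ 2 - α.det) (by
        rw [hPdet]
        nlinarith [abs_nonneg K.det, Real.sqrt_nonneg α.det, Real.sq_sqrt hα.det_nonneg])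
    have := h σ hσ hσ1.ge
    rw [add_comm, det_add_fin_two, hdet_conj, hσ1, trace_mul_mul_mul_transpose] at this
    linarith
  · intro h σ hσ hσ1
    have hKσ : |K.det| ≤ √(K * σ * Kᵀ).det := by
      rw [hdet_conj, Real.sqrt_mul (sq_nonneg _), Real.sqrt_sq (abs_nonneg _)]
      exact le_mul_of_one_le_right (abs_nonneg _) (Real.one_le_sqrt.2 hσ1)
    have := sqrt_det_add_sqrt_det_le_sqrt_det_add
      (by simpa using hσ.mul_mul_conjTranspose_same K) hα
    exact Real.one_le_sqrt.1 (by linarith)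
end

section
/- Infimum over quantum covariance matrices: for any vector w ∈ ℂ^{2n}, the infimum of w† σ w over all real symmetric 2n×2n matrices σ satisfying σ ≥ iΔ and σ ≥ -iΔ equals |w† Δ w|, where Δ is the standard 2n-mode symplectic form. -/
open scoped ComplexOrder
/-- The standard symplectic form `Δ = ⊕ₖ [[0,1],[-1,0]]` on `ℝ^{2n}`. -/
noncomputable def sympForm (n : ℕ) : Matrix (Fin (2 * n)) (Fin (2 * n)) ℝ :=
  Matrix.of fun i j =>
    if (i : ℕ) % 2 = 0 ∧ (j : ℕ) = (i : ℕ) + 1 then 1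
    else if (j : ℕ) % 2 = 0 ∧ (i : ℕ) = (j : ℕ) + 1 then -1
    else 0

/-!
Write `w = x + i y` with `x, y` real. For a real symmetric `σ` one has `w† σ w = xᵀσx + yᵀσy`
and `w† Δ w = 2i xᵀΔy`, while `σ + iΔ ≥ 0` says exactly that `2 aᵀΔb ≤ aᵀσa + bᵀσb` for all
real `a, b`; taking `(a, b) = (x, y)` and `(y, x)` gives the lower bound.

For the upper bound we squeeze. If `s = xᵀΔy > 0` (for `s < 0` swap `x` and `y`), split
`ℝ^{2n}` into `span {x, y}` and its symplectic complement; on the plane take the form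
`s⁻¹ ((xᵀΔ·)² + (yᵀΔ·)²)`, which attains `xᵀσx + yᵀσy = 2s`. If `s = 0`, then `span {x, y}` is
isotropic, hence orthogonal to its image under `Δ`; scaling it by `β` and its image by `β⁻¹`
gives the value `β (|x|² + |y|²) → 0`.
-/

open Matrix

theorem Matrix.IsSymm.transpose_mul_mul {ι κ R : Type*} [Fintype κ] [CommSemiring R]
    {A : Matrix κ κ R} (h : A.IsSymm) (M : Matrix κ ι R) : (Mᵀ * A * M).IsSymm := by
  rw [IsSymm, transpose_mul, transpose_mul, transpose_transpose, h.eq, Matrix.mul_assoc]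

section UncertaintyRelation

variable {ι κ : Type*} [Fintype ι] [Fintype κ]

theorem Matrix.dotProduct_transpose_mul_mul_mulVec {R : Type*} [CommSemiring R]
    (M : Matrix κ ι R) (A : Matrix κ κ R) (x y : ι → R) :
    x ⬝ᵥ (Mᵀ * A * M) *ᵥ y = (M *ᵥ x) ⬝ᵥ A *ᵥ (M *ᵥ y) := by
  rw [← mulVec_mulVec, ← mulVec_mulVec, dotProduct_transpose_mulVec, dotProduct_comm]

theorem Matrix.dotProduct_transpose_mul_self_mulVec {R : Type*} [CommSemiring R]
    (M : Matrix κ ι R) (x y : ι → R) : x ⬝ᵥ (Mᵀ * M) *ᵥ y = (M *ᵥ x) ⬝ᵥ (M *ᵥ y) := by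
  rw [← mulVec_mulVec, dotProduct_transpose_mulVec, dotProduct_comm]

theorem dotProduct_mulVec_eq_neg_of_transpose_eq_neg {R : Type*} [CommRing R] {J : Matrix ι ι R}
    (hJ : Jᵀ = -J) (x y : ι → R) : x ⬝ᵥ J *ᵥ y = -(y ⬝ᵥ J *ᵥ x) := by
  rw [← dotProduct_transpose_mulVec, hJ, neg_mulVec, dotProduct_neg]

theorem dotProduct_mulVec_self_eq_zero_of_transpose_eq_neg {J : Matrix ι ι ℝ} (hJ : Jᵀ = -J)
    (x : ι → ℝ) : x ⬝ᵥ J *ᵥ x = 0 := by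
  linarith [dotProduct_mulVec_eq_neg_of_transpose_eq_neg hJ x x]

/-- The real form of `σ + iJ ≥ 0` (see `posSemidef_map_ofReal_add_I_smul_iff`). -/
def UncertaintyRelation (J σ : Matrix ι ι ℝ) : Prop :=
  ∀ x y : ι → ℝ, 2 * (x ⬝ᵥ J *ᵥ y) ≤ x ⬝ᵥ σ *ᵥ x + y ⬝ᵥ σ *ᵥ y

namespace UncertaintyRelation

variable {J J₁ J₂ σ σ₁ σ₂ : Matrix ι ι ℝ}

theorem add (h₁ : UncertaintyRelation J₁ σ₁) (h₂ : UncertaintyRelation J₂ σ₂) :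
    UncertaintyRelation (J₁ + J₂) (σ₁ + σ₂) := fun x y => by
  simp only [add_mulVec, dotProduct_add]
  linarith [h₁ x y, h₂ x y]

theorem smul (h : UncertaintyRelation J σ) {c : ℝ} (hc : 0 ≤ c) :
    UncertaintyRelation (c • J) (c • σ) := fun x y => by
  simp only [smul_mulVec, dotProduct_smul, smul_eq_mul]
  nlinarith [h x y]

theorem conj (h : UncertaintyRelation J σ) (M : Matrix ι κ ℝ) :
    UncertaintyRelation (Mᵀ * J * M) (Mᵀ * σ * M) := fun x y => by
  simpa only [dotProduct_transpose_mul_mul_mulVec] using h (M *ᵥ x) (M *ᵥ y)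

theorem neg (hJ : Jᵀ = -J) (h : UncertaintyRelation J σ) : UncertaintyRelation (-J) σ :=
  fun x y => by
    rw [neg_mulVec, dotProduct_neg, dotProduct_mulVec_eq_neg_of_transpose_eq_neg hJ]
    linarith [h y x]

end UncertaintyRelation

theorem uncertaintyRelation_one [DecidableEq ι] {J : Matrix ι ι ℝ} (hJ : Jᵀ * J = 1) :
    UncertaintyRelation J 1 := fun x y => by
  have hJy : (J *ᵥ y) ⬝ᵥ (J *ᵥ y) = y ⬝ᵥ y := by
    rw [← dotProduct_transpose_mulVec, mulVec_mulVec, hJ, one_mulVec]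
  have := dotProduct_self_star_nonneg (x - J *ᵥ y)
  simp only [star_trivial, sub_dotProduct, dotProduct_sub, one_mulVec] at this ⊢
  rw [dotProduct_comm (J *ᵥ y) x] at this
  linarith

theorem uncertaintyRelation_vecMulVec_sub (u v : ι → ℝ) :
    UncertaintyRelation (vecMulVec u v - vecMulVec v u) (vecMulVec u u + vecMulVec v v) :=
  fun x y => by
    simp only [sub_mulVec, add_mulVec, vecMulVec_mulVec, op_smul_eq_smul, dotProduct_sub,
      dotProduct_add, dotProduct_smul, smul_eq_mul]
    rw [dotProduct_comm u x, dotProduct_comm v x, dotProduct_comm u y, dotProduct_comm v y]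
    nlinarith [sq_nonneg (x ⬝ᵥ u - y ⬝ᵥ v), sq_nonneg (x ⬝ᵥ v + y ⬝ᵥ u)]

end UncertaintyRelation

section Squeezing

variable {ι : Type*} [Fintype ι] {J : Matrix ι ι ℝ}

/-- For `uᵀJv ≠ 0`: the projection onto `span {u, v}` along its `J`-symplectic complement. -/
noncomputable def symplecticProjection (J : Matrix ι ι ℝ) (u v : ι → ℝ) : Matrix ι ι ℝ :=
  -(u ⬝ᵥ J *ᵥ v)⁻¹ • ((vecMulVec u v - vecMulVec v u) * J)

theorem symplecticProjection_mulVec (J : Matrix ι ι ℝ) (u v x : ι → ℝ) :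
    symplecticProjection J u v *ᵥ x =
      -(u ⬝ᵥ J *ᵥ v)⁻¹ • ((v ⬝ᵥ J *ᵥ x) • u - (u ⬝ᵥ J *ᵥ x) • v) := by
  rw [symplecticProjection, smul_mulVec, ← mulVec_mulVec, sub_mulVec, vecMulVec_mulVec,
    vecMulVec_mulVec, op_smul_eq_smul, op_smul_eq_smul]

theorem symplecticProjection_mulVec_left (hJ : Jᵀ = -J) {u v : ι → ℝ} (hs : u ⬝ᵥ J *ᵥ v ≠ 0) :
    symplecticProjection J u v *ᵥ u = u := by
  rw [symplecticProjection_mulVec, dotProduct_mulVec_eq_neg_of_transpose_eq_neg hJ v u,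
    dotProduct_mulVec_self_eq_zero_of_transpose_eq_neg hJ]
  simp [smul_smul, hs]

theorem symplecticProjection_mulVec_right (hJ : Jᵀ = -J) {u v : ι → ℝ} (hs : u ⬝ᵥ J *ᵥ v ≠ 0) :
    symplecticProjection J u v *ᵥ v = v := by
  rw [symplecticProjection_mulVec, dotProduct_mulVec_self_eq_zero_of_transpose_eq_neg hJ]
  simp [smul_smul, hs]

theorem transpose_mul_mul_add_symplecticProjection [DecidableEq ι] (hJ : Jᵀ = -J) {u v : ι → ℝ}
    (hs : u ⬝ᵥ J *ᵥ v ≠ 0) :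
    Jᵀ * ((u ⬝ᵥ J *ᵥ v)⁻¹ • (vecMulVec u v - vecMulVec v u)) * J +
      (1 - symplecticProjection J u v)ᵀ * J * (1 - symplecticProjection J u v) = J := by
  set s := u ⬝ᵥ J *ᵥ v with hs_def
  set N := vecMulVec u v - vecMulVec v u with hN
  have hNJN : ∀ X : Matrix ι ι ℝ, N * (J * (N * X)) = -s • (N * X) := fun X => by
    simp only [← Matrix.mul_assoc, hN, sub_mul, mul_sub, vecMulVec_mul, vecMul_vecMulVec,
      ← dotProduct_mulVec, dotProduct_mulVec_eq_neg_of_transpose_eq_neg hJ v u,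
      dotProduct_mulVec_self_eq_zero_of_transpose_eq_neg hJ, ← hs_def, vecMulVec_smul, zero_smul,
      vecMulVec_zero]
    module
  have hNt : Nᵀ = -N := by simp [hN]
  simp only [symplecticProjection, ← hs_def, ← hN, transpose_sub, transpose_one, transpose_neg,
    transpose_smul, transpose_mul, hJ, hNt, sub_mul, mul_sub, smul_mul_assoc, mul_smul_comm,
    Matrix.mul_assoc, Matrix.one_mul, Matrix.mul_one, neg_mul, mul_neg, smul_neg, neg_smul, hNJN,
    smul_smul, inv_mul_cancel₀ hs, one_smul]
  module

theorem exists_uncertaintyRelation_eq_of_pos [DecidableEq ι] (hJ : Jᵀ = -J) (hJJ : J * J = -1)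
    {u v : ι → ℝ} (hs : 0 < u ⬝ᵥ J *ᵥ v) :
    ∃ σ : Matrix ι ι ℝ, σ.IsSymm ∧ UncertaintyRelation J σ ∧
      u ⬝ᵥ σ *ᵥ u + v ⬝ᵥ σ *ᵥ v = 2 * (u ⬝ᵥ J *ᵥ v) := by
  set s := u ⬝ᵥ J *ᵥ v with hs_def
  set P := symplecticProjection J u v
  have hPu : (1 - P) *ᵥ u = 0 := by
    rw [sub_mulVec, one_mulVec, symplecticProjection_mulVec_left hJ hs.ne', sub_self]
  have hPv : (1 - P) *ᵥ v = 0 := by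
    rw [sub_mulVec, one_mulVec, symplecticProjection_mulVec_right hJ hs.ne', sub_self]
  refine ⟨Jᵀ * (s⁻¹ • (vecMulVec u u + vecMulVec v v)) * J + (1 - P)ᵀ * (1 - P), ?_, ?_, ?_⟩
  · have hG : (vecMulVec u u + vecMulVec v v).IsSymm :=
      IsSymm.add (transpose_vecMulVec u u) (transpose_vecMulVec v v)
    exact ((hG.smul _).transpose_mul_mul J).add (isSymm_transpose_mul_self _)
  · have := ((uncertaintyRelation_vecMulVec_sub u v).smul (inv_nonneg.2 hs.le)).conj J |>.add
      ((uncertaintyRelation_one (by rw [hJ, neg_mul, hJJ, neg_neg])).conj (1 - P))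
    rwa [transpose_mul_mul_add_symplecticProjection hJ hs.ne', Matrix.mul_one] at this
  · simp only [add_mulVec, dotProduct_add, dotProduct_transpose_mul_mul_mulVec,
      dotProduct_transpose_mul_self_mulVec, hPu, hPv, dotProduct_zero, add_zero, smul_mulVec,
      vecMulVec_mulVec, op_smul_eq_smul, dotProduct_smul, smul_eq_mul]
    rw [dotProduct_comm (J *ᵥ u) u, dotProduct_comm (J *ᵥ u) v, dotProduct_comm (J *ᵥ v) u,
      dotProduct_comm (J *ᵥ v) v, dotProduct_mulVec_eq_neg_of_transpose_eq_neg hJ v u,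
      dotProduct_mulVec_self_eq_zero_of_transpose_eq_neg hJ,
      dotProduct_mulVec_self_eq_zero_of_transpose_eq_neg hJ, ← hs_def]
    field_simp
    ring

open WithLp in
theorem exists_isotropic_projection [DecidableEq ι] (hJ : Jᵀ = -J) {u v : ι → ℝ}
    (huv : u ⬝ᵥ J *ᵥ v = 0) :
    ∃ Q : Matrix ι ι ℝ, Qᵀ = Q ∧ Q * Q = Q ∧ Q * J * Q = 0 ∧ Q *ᵥ u = u ∧ Q *ᵥ v = v := by
  set K : Submodule ℝ (EuclideanSpace ℝ ι) := Submodule.span ℝ {toLp 2 u, toLp 2 v}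
  have hK : ∀ a ∈ K, ∀ b ∈ K, ofLp a ⬝ᵥ J *ᵥ ofLp b = 0 := by
    intro a ha b hb
    obtain ⟨a₁, a₂, rfl⟩ := Submodule.mem_span_pair.1 ha
    obtain ⟨b₁, b₂, rfl⟩ := Submodule.mem_span_pair.1 hb
    simp [mulVec_add, mulVec_smul, dotProduct_add, add_dotProduct, huv,
      dotProduct_mulVec_eq_neg_of_transpose_eq_neg hJ v u,
      dotProduct_mulVec_self_eq_zero_of_transpose_eq_neg hJ]
  set Q := (toEuclideanCLM (𝕜 := ℝ) (n := ι)).symm K.starProjection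
  have hQ : ∀ x, Q *ᵥ x = ofLp (K.starProjection (toLp 2 x)) := fun x => by
    rw [← ofLp_toEuclideanCLM, StarAlgEquiv.apply_symm_apply]
  refine ⟨Q, ?_, K.isIdempotentElem_starProjection.map (toEuclideanCLM (𝕜 := ℝ) (n := ι)).symm,
    ?_, ?_, ?_⟩
  · have hQ : Q.IsHermitian := isSymmetric_toEuclideanLin_iff.1 <| by
      rw [← coe_toEuclideanCLM_eq_toEuclideanLin, StarAlgEquiv.apply_symm_apply]
      exact K.starProjection_isSymmetric
    rwa [IsHermitian, conjTranspose_eq_transpose_of_trivial] at hQ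
  · refine ext_iff_mulVec.2 fun x => ?_
    rw [zero_mulVec, ← mulVec_mulVec, ← mulVec_mulVec, hQ, hQ, ofLp_eq_zero,
      Submodule.starProjection_apply_eq_zero_iff]
    intro a ha
    rw [← toEuclideanCLM_toLp, toLp_ofLp, inner_toEuclideanCLM]
    exact hK a ha _ (K.starProjection_apply_mem _)
  · rw [hQ, Submodule.starProjection_eq_self_iff.2 (Submodule.subset_span (by simp))]
  · rw [hQ, Submodule.starProjection_eq_self_iff.2 (Submodule.subset_span (by simp))]

-- `J Q Jᵀ` projects onto `J (range Q)`, which is orthogonal to the isotropic `range Q`;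
-- the first factor squeezes `range Q` by `t` and stretches `J (range Q)` by `t⁻¹`.
theorem transpose_mul_mul_add_of_isotropic [DecidableEq ι] (hJ : Jᵀ = -J) (hJJ : J * J = -1)
    {Q : Matrix ι ι ℝ} (hQ : Qᵀ = Q) (hQQ : Q * Q = Q) (hQJQ : Q * J * Q = 0) {t : ℝ} (ht : t ≠ 0) :
    (t • Q + t⁻¹ • (J * Q * Jᵀ))ᵀ * J * (t • Q + t⁻¹ • (J * Q * Jᵀ)) +
      (1 - Q - J * Q * Jᵀ)ᵀ * J * (1 - Q - J * Q * Jᵀ) = J := by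
  -- right-associated forms of the relations, so that `simp` normalises words in `J` and `Q`
  have hJJ' : ∀ X : Matrix ι ι ℝ, J * (J * X) = -X := fun X => by
    rw [← Matrix.mul_assoc, hJJ, neg_one_mul]
  have hQQ' : ∀ X : Matrix ι ι ℝ, Q * (Q * X) = Q * X := fun X => by
    rw [← Matrix.mul_assoc, hQQ]
  have hQJQ₁ : Q * (J * Q) = 0 := by rw [← Matrix.mul_assoc, hQJQ]
  have hQJQ' : ∀ X : Matrix ι ι ℝ, Q * (J * (Q * X)) = 0 := fun X => by
    rw [← Matrix.mul_assoc, ← Matrix.mul_assoc, hQJQ, Matrix.zero_mul]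
  have hQ't : (J * Q * Jᵀ)ᵀ = J * Q * Jᵀ := by
    rw [transpose_mul, transpose_mul, transpose_transpose, hQ, Matrix.mul_assoc]
  rw [transpose_add, transpose_sub, transpose_sub, transpose_smul, transpose_smul, transpose_one,
    hQ, hQ't]
  simp only [hJ, add_mul, sub_mul, mul_add, mul_sub, smul_mul_assoc, mul_smul_comm,
    Matrix.mul_assoc, Matrix.one_mul, Matrix.mul_one, neg_mul, mul_neg, neg_neg, smul_neg, hJJ,
    hJJ', hQQ, hQQ', hQJQ₁, hQJQ', Matrix.mul_zero, smul_zero]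
  match_scalars <;> field_simp <;> ring

theorem exists_uncertaintyRelation_of_isotropic [DecidableEq ι] (hJ : Jᵀ = -J) (hJJ : J * J = -1)
    {Q : Matrix ι ι ℝ} (hQ : Qᵀ = Q) (hQQ : Q * Q = Q) (hQJQ : Q * J * Q = 0) {β : ℝ}
    (hβ : 0 < β) :
    ∃ σ : Matrix ι ι ℝ, σ.IsSymm ∧ UncertaintyRelation J σ ∧
      ∀ x, Q *ᵥ x = x → x ⬝ᵥ σ *ᵥ x = β * (x ⬝ᵥ x) := by
  set D := √β • Q + (√β)⁻¹ • (J * Q * Jᵀ) with hD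
  set R := 1 - Q - J * Q * Jᵀ with hR
  refine ⟨Dᵀ * D + Rᵀ * R, (isSymm_transpose_mul_self D).add (isSymm_transpose_mul_self R), ?_, ?_⟩
  · have hJ1 : Jᵀ * J = 1 := by rw [hJ, neg_mul, hJJ, neg_neg]
    have := ((uncertaintyRelation_one hJ1).conj D).add ((uncertaintyRelation_one hJ1).conj R)
    rwa [Matrix.mul_one, Matrix.mul_one, transpose_mul_mul_add_of_isotropic hJ hJJ hQ hQQ hQJQ
      (Real.sqrt_pos.2 hβ).ne'] at this
  · intro x hx
    have hQ'x : (J * Q * Jᵀ) *ᵥ x = 0 := by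
      have hQJQ₁ : Q * (J * Q) = 0 := by rw [← Matrix.mul_assoc, hQJQ]
      rw [← hx, mulVec_mulVec, hJ]
      simp [Matrix.mul_assoc, hQJQ₁]
    have hDx : D *ᵥ x = √β • x := by
      rw [hD, add_mulVec, smul_mulVec, smul_mulVec, hx, hQ'x, smul_zero, add_zero]
    have hRx : R *ᵥ x = 0 := by
      rw [hR, sub_mulVec, sub_mulVec, one_mulVec, hx, hQ'x, sub_self, sub_zero]
    rw [add_mulVec, dotProduct_add, dotProduct_transpose_mul_self_mulVec,
      dotProduct_transpose_mul_self_mulVec, hDx, hRx, dotProduct_zero, add_zero, smul_dotProduct,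
      dotProduct_smul, smul_eq_mul, smul_eq_mul, ← mul_assoc, Real.mul_self_sqrt hβ.le]

theorem exists_uncertaintyRelation_le [DecidableEq ι] (hJ : Jᵀ = -J) (hJJ : J * J = -1)
    (u v : ι → ℝ) {ε : ℝ} (hε : 0 < ε) :
    ∃ σ : Matrix ι ι ℝ, σ.IsSymm ∧ UncertaintyRelation J σ ∧
      u ⬝ᵥ σ *ᵥ u + v ⬝ᵥ σ *ᵥ v ≤ |2 * (u ⬝ᵥ J *ᵥ v)| + ε := by
  have hvu := dotProduct_mulVec_eq_neg_of_transpose_eq_neg hJ v u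
  rcases lt_trichotomy (u ⬝ᵥ J *ᵥ v) 0 with hs | hs | hs
  · obtain ⟨σ, hσ, hJσ, hval⟩ := exists_uncertaintyRelation_eq_of_pos hJ hJJ (u := v) (v := u)
      (by linarith)
    exact ⟨σ, hσ, hJσ, by rw [abs_of_neg (by linarith)]; linarith⟩
  · obtain ⟨Q, hQ, hQQ, hQJQ, hQu, hQv⟩ := exists_isotropic_projection hJ hs
    have hsq : ∀ x : ι → ℝ, 0 ≤ x ⬝ᵥ x := fun x => by simpa using dotProduct_self_star_nonneg x
    have hpos : 0 < u ⬝ᵥ u + v ⬝ᵥ v + 1 := by linarith [hsq u, hsq v]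
    obtain ⟨σ, hσ, hJσ, hval⟩ :=
      exists_uncertaintyRelation_of_isotropic hJ hJJ hQ hQQ hQJQ (div_pos hε hpos)
    refine ⟨σ, hσ, hJσ, ?_⟩
    rw [hval u hQu, hval v hQv, hs, mul_zero, abs_zero, zero_add, ← mul_add, div_mul_eq_mul_div,
      div_le_iff₀ hpos]
    nlinarith
  · obtain ⟨σ, hσ, hJσ, hval⟩ := exists_uncertaintyRelation_eq_of_pos hJ hJJ hs
    exact ⟨σ, hσ, hJσ, by rw [abs_of_pos (by linarith)]; linarith⟩

end Squeezing

section Complexification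

open Complex

variable {ι : Type*} [Fintype ι]

theorem re_star_dotProduct_map_ofReal_mulVec (M : Matrix ι ι ℝ) (z : ι → ℂ) :
    (star z ⬝ᵥ M.map (fun a => (a : ℂ)) *ᵥ z).re =
      (re ∘ z) ⬝ᵥ M *ᵥ (re ∘ z) + (im ∘ z) ⬝ᵥ M *ᵥ (im ∘ z) := by
  simp only [dotProduct, mulVec, Pi.star_apply, map_apply, Function.comp_apply, re_sum,
    Finset.mul_sum, ← Finset.sum_add_distrib]
  refine Finset.sum_congr rfl fun i _ => Finset.sum_congr rfl fun j _ => ?_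
  simp only [mul_re, mul_im, star_def, conj_re, conj_im, ofReal_re, ofReal_im]
  ring

theorem im_star_dotProduct_map_ofReal_mulVec (M : Matrix ι ι ℝ) (z : ι → ℂ) :
    (star z ⬝ᵥ M.map (fun a => (a : ℂ)) *ᵥ z).im =
      (re ∘ z) ⬝ᵥ M *ᵥ (im ∘ z) - (im ∘ z) ⬝ᵥ M *ᵥ (re ∘ z) := by
  simp only [dotProduct, mulVec, Pi.star_apply, map_apply, Function.comp_apply, im_sum,
    Finset.mul_sum, ← Finset.sum_sub_distrib]
  refine Finset.sum_congr rfl fun i _ => Finset.sum_congr rfl fun j _ => ?_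
  simp only [mul_re, mul_im, star_def, conj_re, conj_im, ofReal_re, ofReal_im]
  ring

theorem posSemidef_map_ofReal_add_I_smul_iff {σ K : Matrix ι ι ℝ} (hσ : σ.IsSymm)
    (hK : Kᵀ = -K) :
    (σ.map (fun a => (a : ℂ)) + I • K.map (fun a => (a : ℂ))).PosSemidef ↔
      UncertaintyRelation K σ := by
  have hKij : ∀ i j, K j i = -K i j := fun i j => by simpa using congrFun₂ hK i j
  have herm : (σ.map (fun a => (a : ℂ)) + I • K.map (fun a => (a : ℂ))).IsHermitian := by
    ext i j
    apply Complex.ext <;> simp [hσ.apply i j, hKij i j]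
  have hval : ∀ z : ι → ℂ,
      star z ⬝ᵥ (σ.map (fun a => (a : ℂ)) + I • K.map (fun a => (a : ℂ))) *ᵥ z =
        ↑((re ∘ z) ⬝ᵥ σ *ᵥ (re ∘ z) + (im ∘ z) ⬝ᵥ σ *ᵥ (im ∘ z)
          - 2 * ((re ∘ z) ⬝ᵥ K *ᵥ (im ∘ z))) := fun z => by
    have hσ' := dotProduct_transpose_mulVec σ (re ∘ z) (im ∘ z)
    rw [hσ.eq] at hσ'
    apply Complex.ext
    · simp only [add_mulVec, smul_mulVec, dotProduct_add, dotProduct_smul, smul_eq_mul, add_re,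
        mul_re, I_re, I_im, re_star_dotProduct_map_ofReal_mulVec,
        im_star_dotProduct_map_ofReal_mulVec, ofReal_re,
        dotProduct_mulVec_eq_neg_of_transpose_eq_neg hK (im ∘ z) (re ∘ z)]
      ring
    · simp only [add_mulVec, smul_mulVec, dotProduct_add, dotProduct_smul, smul_eq_mul, add_im,
        mul_im, I_re, I_im, re_star_dotProduct_map_ofReal_mulVec,
        im_star_dotProduct_map_ofReal_mulVec, ofReal_im,
        dotProduct_mulVec_self_eq_zero_of_transpose_eq_neg hK, hσ']
      ring
  simp only [posSemidef_iff_dotProduct_mulVec, herm, true_and, hval, zero_le_real, sub_nonneg]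
  exact ⟨fun h x y => h fun i => ⟨x i, y i⟩, fun h z => h _ _⟩

theorem posSemidef_map_ofReal_sub_I_smul_iff {σ K : Matrix ι ι ℝ} (hσ : σ.IsSymm)
    (hK : Kᵀ = -K) :
    (σ.map (fun a => (a : ℂ)) - I • K.map (fun a => (a : ℂ))).PosSemidef ↔
      UncertaintyRelation K σ := by
  have hK' : (-K)ᵀ = -(-K) := by rw [transpose_neg, hK]
  rw [sub_eq_add_neg, ← smul_neg, ← Matrix.map_neg _ ofReal_neg,
    posSemidef_map_ofReal_add_I_smul_iff hσ hK']
  exact ⟨fun h => neg_neg K ▸ h.neg hK', fun h => h.neg hK⟩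

theorem norm_star_dotProduct_map_ofReal_mulVec_of_transpose_eq_neg {K : Matrix ι ι ℝ}
    (hK : Kᵀ = -K) (z : ι → ℂ) :
    ‖star z ⬝ᵥ K.map (fun a => (a : ℂ)) *ᵥ z‖ = |2 * ((re ∘ z) ⬝ᵥ K *ᵥ (im ∘ z))| := by
  have hre : (star z ⬝ᵥ K.map (fun a => (a : ℂ)) *ᵥ z).re = 0 := by
    rw [re_star_dotProduct_map_ofReal_mulVec, dotProduct_mulVec_self_eq_zero_of_transpose_eq_neg hK,
      dotProduct_mulVec_self_eq_zero_of_transpose_eq_neg hK, add_zero]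
  rw [← abs_im_eq_norm.2 hre, im_star_dotProduct_map_ofReal_mulVec,
    dotProduct_mulVec_eq_neg_of_transpose_eq_neg hK (im ∘ z), sub_neg_eq_add, two_mul]

end Complexification

theorem sympForm_transpose (n : ℕ) : (sympForm n)ᵀ = -sympForm n := by
  ext i j
  rw [transpose_apply, neg_apply]
  simp only [sympForm, of_apply]
  split_ifs <;> first | omega | norm_num

theorem sympForm_mul_self (n : ℕ) : sympForm n * sympForm n = -1 := by
  ext i j
  -- the only nonzero entry in row `i` sits in the column of the partner coordinate of `i`
  let p : Fin (2 * n) := ⟨if (i : ℕ) % 2 = 0 then i + 1 else i - 1, by split_ifs <;> omega⟩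
  rw [neg_apply, one_apply, mul_apply, Finset.sum_eq_single p]
  · simp only [sympForm, of_apply, Fin.ext_iff, p]
    split_ifs <;> first | omega | norm_num
  · intro k _ hk
    simp only [sympForm, of_apply, ne_eq, Fin.ext_iff, p] at hk ⊢
    split_ifs at hk ⊢ <;> first | omega | norm_num
  · simp

/-- Infimum over quantum covariance matrices: for any `w ∈ ℂ^{2n}`, the infimum of `w† σ w`
over all real symmetric `σ` with `σ ≥ ± i Δ` equals `|w† Δ w|`. -/
theorem inf_over_covariance_matrices (n : ℕ) (w : Fin (2 * n) → ℂ) :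
    IsGLB
      {r : ℝ | ∃ σ : Matrix (Fin (2 * n)) (Fin (2 * n)) ℝ, σ.IsSymm ∧
        (σ.map (fun a => (a : ℂ)) + Complex.I • (sympForm n).map (fun a => (a : ℂ))).PosSemidef ∧
        (σ.map (fun a => (a : ℂ)) - Complex.I • (sympForm n).map (fun a => (a : ℂ))).PosSemidef ∧
        r = (dotProduct (star w) ((σ.map (fun a => (a : ℂ))).mulVec w)).re}
      ‖(dotProduct (star w) (((sympForm n).map (fun a => (a : ℂ))).mulVec w))‖ := by
  have hΔ := sympForm_transpose n
  rw [norm_star_dotProduct_map_ofReal_mulVec_of_transpose_eq_neg hΔ]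
  constructor
  · rintro r ⟨σ, hσ, hplus, -, rfl⟩
    have h := (posSemidef_map_ofReal_add_I_smul_iff hσ hΔ).1 hplus
    rw [re_star_dotProduct_map_ofReal_mulVec, abs_le]
    have := dotProduct_mulVec_eq_neg_of_transpose_eq_neg hΔ (Complex.im ∘ w) (Complex.re ∘ w)
    constructor <;>
      linarith [h (Complex.re ∘ w) (Complex.im ∘ w), h (Complex.im ∘ w) (Complex.re ∘ w)]
  · intro b hb
    refine le_of_forall_pos_le_add fun ε hε => ?_
    obtain ⟨σ, hσ, hJσ, hle⟩ :=
      exists_uncertaintyRelation_le hΔ (sympForm_mul_self n) (Complex.re ∘ w) (Complex.im ∘ w) hε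
    have := hb ⟨σ, hσ, (posSemidef_map_ofReal_add_I_smul_iff hσ hΔ).2 hJσ,
      (posSemidef_map_ofReal_sub_I_smul_iff hσ hΔ).2 hJσ, rfl⟩
    rw [re_star_dotProduct_map_ofReal_mulVec] at this
    linarith
end

section
/- Projector distance via overlap: for a unit vector |n⟩ in a Hilbert space and an orthogonal projection P with ⟨n|P|n⟩ > 0, the trace-norm distance between |n⟩⟨n| and the normalized projected state P|n⟩⟨n|P / ⟨n|P|n⟩ equals 2√(⟨n|Q|n⟩), where Q = I - P. -/
/-!
Put `u = P n`, `v = n - P n`, `a = ‖u‖`, `c = ‖v‖`, so that `u ⟂ v` and `a² + c² = 1`. In the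
orthonormal frame `f = u / a`, `g = v / c` the operator is `|a f + c g⟩⟨a f + c g| - |f⟩⟨f|`, with
matrix `c [[-c, a], [a, c]]`: `c` times a reflection. Writing `(a, c) = (sin 2θ, cos 2θ)`, the frame
rotated by `θ` diagonalises it as `c |e₁⟩⟨e₁| - c |e₂⟩⟨e₂|`. For any spectral sum `∑ μⱼ |eⱼ⟩⟨eⱼ|`
the diagonal sums `∑ᵢ |⟨φᵢ|A|φᵢ⟩|` are at most `∑ⱼ |μⱼ|` by Bessel's inequality, with equality for
`φ = e`; hence the distance is `2c = 2 √⟨n|Q|n⟩`.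
-/

open scoped InnerProductSpace

section

variable {H : Type*} [NormedAddCommGroup H] [InnerProductSpace ℂ H]

/-- The supremum of this set is the trace norm of `A` when `A` is self-adjoint of finite rank. -/
def absDiagonalSums (A : H → H) : Set ℝ :=
  {r | ∃ (m : ℕ) (φ : Fin m → H), Orthonormal ℂ φ ∧ r = ∑ i, ‖⟪φ i, A (φ i)⟫_ℂ‖}

section Spectral

variable {ι : Type*} [Fintype ι] {e : ι → H} {μ : ι → ℝ} {A : H → H}

theorem inner_apply_eq_sum_of_spectral (hA : ∀ x, A x = ∑ j, (μ j : ℂ) • (⟪e j, x⟫_ℂ • e j))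
    (y : H) : ⟪y, A y⟫_ℂ = ∑ j, ((μ j * ‖⟪e j, y⟫_ℂ‖ ^ 2 : ℝ) : ℂ) := by
  rw [hA, inner_sum]
  refine Finset.sum_congr rfl fun j _ => ?_
  rw [inner_smul_right, inner_smul_right, ← inner_conj_symm y, Complex.mul_conj']
  push_cast
  ring

theorem norm_inner_apply_le_of_spectral (hA : ∀ x, A x = ∑ j, (μ j : ℂ) • (⟪e j, x⟫_ℂ • e j))
    (y : H) : ‖⟪y, A y⟫_ℂ‖ ≤ ∑ j, |μ j| * ‖⟪y, e j⟫_ℂ‖ ^ 2 := by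
  rw [inner_apply_eq_sum_of_spectral hA]
  refine (norm_sum_le _ _).trans_eq (Finset.sum_congr rfl fun j _ => ?_)
  rw [Complex.norm_real, Real.norm_eq_abs, abs_mul, abs_sq, norm_inner_symm]

theorem inner_apply_self_of_spectral (he : Orthonormal ℂ e)
    (hA : ∀ x, A x = ∑ j, (μ j : ℂ) • (⟪e j, x⟫_ℂ • e j)) (i : ι) : ⟪e i, A (e i)⟫_ℂ = μ i := by
  classical
  rw [inner_apply_eq_sum_of_spectral hA, Finset.sum_eq_single i]
  · simp [he.norm_eq_one]
  · intro j _ hji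
    simp [he.inner_eq_zero hji]
  · simp

theorem isLUB_absDiagonalSums_of_spectral (he : Orthonormal ℂ e)
    (hA : ∀ x, A x = ∑ j, (μ j : ℂ) • (⟪e j, x⟫_ℂ • e j)) :
    IsLUB (absDiagonalSums A) (∑ j, |μ j|) := by
  refine IsGreatest.isLUB ⟨?_, ?_⟩
  · let σ := Fintype.equivFin ι
    refine ⟨Fintype.card ι, e ∘ σ.symm, he.comp _ σ.symm.injective, ?_⟩
    simp only [Function.comp_apply, inner_apply_self_of_spectral he hA, Complex.norm_real,
      Real.norm_eq_abs]
    exact (σ.symm.sum_comp fun j => |μ j|).symm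
  · rintro r ⟨m, φ, hφ, rfl⟩
    calc ∑ i, ‖⟪φ i, A (φ i)⟫_ℂ‖
        ≤ ∑ i, ∑ j, |μ j| * ‖⟪φ i, e j⟫_ℂ‖ ^ 2 :=
          Finset.sum_le_sum fun i _ => norm_inner_apply_le_of_spectral hA (φ i)
      _ = ∑ j, |μ j| * ∑ i, ‖⟪φ i, e j⟫_ℂ‖ ^ 2 := by
          rw [Finset.sum_comm]; simp only [Finset.mul_sum]
      _ ≤ ∑ j, |μ j| * 1 := by
          gcongr with j
          simpa [norm_inner_symm, he.norm_eq_one] using hφ.sum_inner_products_le (e j)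
      _ = ∑ j, |μ j| := by simp

end Spectral

theorem Orthonormal.reflect_pair {f g : H} (h : Orthonormal ℂ ![f, g]) {α β : ℝ}
    (hαβ : α ^ 2 + β ^ 2 = 1) :
    Orthonormal ℂ ![(α : ℂ) • f + (β : ℂ) • g, (β : ℂ) • f - (α : ℂ) • g] := by
  have hff : ⟪f, f⟫_ℂ = 1 := by simpa using (orthonormal_iff_ite.mp h) 0 0
  have hgg : ⟪g, g⟫_ℂ = 1 := by simpa using (orthonormal_iff_ite.mp h) 1 1
  have hfg : ⟪f, g⟫_ℂ = 0 := by simpa using (orthonormal_iff_ite.mp h) 0 1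
  have hgf : ⟪g, f⟫_ℂ = 0 := by simpa using (orthonormal_iff_ite.mp h) 1 0
  have hαβ' : (α : ℂ) ^ 2 + (β : ℂ) ^ 2 = 1 := by exact_mod_cast hαβ
  rw [orthonormal_iff_ite]
  intro i j
  fin_cases i <;> fin_cases j <;>
    simp only [Fin.zero_eta, Fin.mk_one, Matrix.cons_val_zero, Matrix.cons_val_one, inner_add_left,
      inner_add_right, inner_sub_left, inner_sub_right, inner_smul_left, inner_smul_right,
      Complex.conj_ofReal, hff, hgg, hfg, hgf, if_true, if_false, zero_ne_one, one_ne_zero]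
  · linear_combination hαβ'
  · ring
  · ring
  · linear_combination hαβ'

theorem rankOne_sub_rankOne_eq_double_angle (f g x : H) {α β a c : ℝ}
    (hαβ : α ^ 2 + β ^ 2 = 1) (ha : 2 * α * β = a) (hc : β ^ 2 - α ^ 2 = c) :
    ⟪(a : ℂ) • f + (c : ℂ) • g, x⟫_ℂ • ((a : ℂ) • f + (c : ℂ) • g) - ⟪f, x⟫_ℂ • f =
      (c : ℂ) • (⟪(α : ℂ) • f + (β : ℂ) • g, x⟫_ℂ • ((α : ℂ) • f + (β : ℂ) • g)) -
        (c : ℂ) • (⟪(β : ℂ) • f - (α : ℂ) • g, x⟫_ℂ • ((β : ℂ) • f - (α : ℂ) • g)) := by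
  have hαβ' : (α : ℂ) ^ 2 + (β : ℂ) ^ 2 = 1 := by exact_mod_cast hαβ
  subst ha hc
  simp only [inner_add_left, inner_sub_left, inner_smul_left, Complex.conj_ofReal]
  push_cast
  match_scalars
  · linear_combination ⟪f, x⟫_ℂ * ((α : ℂ) ^ 2 + (β : ℂ) ^ 2 + 1) * hαβ'
  · ring

theorem exists_half_angle {a c : ℝ} (ha : 0 ≤ a) (h : a ^ 2 + c ^ 2 = 1) :
    ∃ α β : ℝ, α ^ 2 + β ^ 2 = 1 ∧ 2 * α * β = a ∧ β ^ 2 - α ^ 2 = c := by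
  have hc₁ : 0 ≤ 1 - c := by nlinarith
  have hc₂ : 0 ≤ 1 + c := by nlinarith
  refine ⟨√((1 - c) / 2), √((1 + c) / 2), ?_, ?_, ?_⟩
  · rw [Real.sq_sqrt (by linarith), Real.sq_sqrt (by linarith)]; ring
  · refine (sq_eq_sq₀ (by positivity) ha).mp ?_
    rw [mul_pow, mul_pow, Real.sq_sqrt (by linarith), Real.sq_sqrt (by linarith)]
    linarith
  · rw [Real.sq_sqrt (by linarith), Real.sq_sqrt (by linarith)]; ring

theorem isLUB_absDiagonalSums_of_orthonormal_pair {f g : H} (hfg : Orthonormal ℂ ![f, g])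
    {a c : ℝ} (ha : 0 ≤ a) (hc : 0 ≤ c) (hac : a ^ 2 + c ^ 2 = 1) :
    IsLUB (absDiagonalSums fun x =>
        ⟪(a : ℂ) • f + (c : ℂ) • g, x⟫_ℂ • ((a : ℂ) • f + (c : ℂ) • g) - ⟪f, x⟫_ℂ • f)
      (2 * c) := by
  obtain ⟨α, β, hαβ, hα, hβ⟩ := exists_half_angle ha hac
  convert isLUB_absDiagonalSums_of_spectral (hfg.reflect_pair hαβ) (μ := ![c, -c])
    fun x => ?_ using 1
  · simp [abs_of_nonneg hc]; ring
  · rw [rankOne_sub_rankOne_eq_double_angle f g x hαβ hα hβ]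
    simp only [Fin.sum_univ_two, Matrix.cons_val_zero, Matrix.cons_val_one, Complex.ofReal_neg,
      neg_smul, sub_eq_add_neg]

theorem isLUB_absDiagonalSums_sub_normalized_component {u v : H} (huv : ⟪u, v⟫_ℂ = 0)
    (hn : ‖u + v‖ = 1) (hu : u ≠ 0) :
    IsLUB (absDiagonalSums fun x =>
        ⟪u + v, x⟫_ℂ • (u + v) - ((‖u‖ ^ 2 : ℝ) : ℂ)⁻¹ • (⟪u, x⟫_ℂ • u))
      (2 * ‖v‖) := by
  by_cases hv : v = 0
  · subst hv
    rw [add_zero] at hn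
    convert isLUB_absDiagonalSums_of_spectral (Orthonormal.of_isEmpty (![] : Fin 0 → H))
      (μ := ![]) fun x => ?_
    · simp
    · simp [hn]
  have hac : ‖u‖ ^ 2 + ‖v‖ ^ 2 = 1 := by
    have h := norm_add_sq_eq_norm_sq_add_norm_sq_of_inner_eq_zero _ _ huv
    rw [hn] at h
    linear_combination -h
  have hfg : Orthonormal ℂ ![(‖u‖ : ℂ)⁻¹ • u, (‖v‖ : ℂ)⁻¹ • v] :=
    orthonormal_vecCons_iff.mpr ⟨norm_smul_inv_norm hu,
      fun i => by fin_cases i; simp [inner_smul_left, inner_smul_right, huv],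
      orthonormal_vecCons_iff.mpr ⟨norm_smul_inv_norm hv, finZeroElim, .of_isEmpty _⟩⟩
  convert isLUB_absDiagonalSums_of_orthonormal_pair hfg (norm_nonneg u) (norm_nonneg v) hac
    using 4 with x
  · simp [smul_smul, hu, hv]
  · simp only [inner_smul_left, map_inv₀, Complex.conj_ofReal, smul_smul]
    congr 1
    push_cast
    ring

section StarProjection

variable [CompleteSpace H] {p : H →L[ℂ] H}

theorem IsStarProjection.inner_apply_comm (hp : IsStarProjection p) (x y : H) :
    ⟪p x, y⟫_ℂ = ⟪x, p y⟫_ℂ :=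
  hp.isSelfAdjoint.isSymmetric x y

theorem IsStarProjection.inner_apply_eq_norm_sq (hp : IsStarProjection p) (x : H) :
    ⟪x, p x⟫_ℂ = (‖p x‖ ^ 2 : ℝ) := by
  have hpp : p (p x) = p x := congrArg (fun q : H →L[ℂ] H => q x) hp.isIdempotentElem.eq
  rw [← hpp, ← hp.inner_apply_comm, hpp, inner_self_eq_norm_sq_to_K]
  norm_cast

theorem IsStarProjection.inner_apply_sub_self_eq_zero (hp : IsStarProjection p) (x : H) :
    ⟪p x, x - p x⟫_ℂ = 0 := by
  have h : p (x - p x) = 0 := by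
    simpa using congrArg (fun q : H →L[ℂ] H => q x) hp.mul_one_sub_self
  rw [hp.inner_apply_comm, h, inner_zero_right]

end StarProjection

end

/-- Projector distance via overlap: for a unit vector `n` in a Hilbert space and an orthogonal
projection `P` with `⟨n|P|n⟩ > 0`, the trace-norm distance between `|n⟩⟨n|` and the normalized
projected state `P|n⟩⟨n|P / ⟨n|P|n⟩` equals `2 √⟨n|Q|n⟩`, where `Q = I - P`.
The trace norm of the (self-adjoint, rank ≤ 2) difference operator
`A x = ⟪n, x⟫ • n - ⟪n, P n⟫⁻¹ • (⟪P n, x⟫ • P n)` is expressed as the supremum over all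
finite orthonormal families `φ` of `∑ i |⟪φ i, A (φ i)⟫|`. -/
theorem projector_distance_via_overlap
    {H : Type*} [NormedAddCommGroup H] [InnerProductSpace ℂ H] [CompleteSpace H]
    (n : H) (hn : ‖n‖ = 1) (P : H →L[ℂ] H)
    (h_idem : P.comp P = P) (h_sa : IsSelfAdjoint P)
    (h_pos : 0 < (inner ℂ n (P n) : ℂ).re) :
    IsLUB
      {r : ℝ | ∃ (m : ℕ) (φ : Fin m → H), Orthonormal ℂ φ ∧
        r = ∑ i, ‖
          ((inner ℂ (φ i)
            ((inner ℂ n (φ i) : ℂ) • n -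
              ((inner ℂ n (P n) : ℂ))⁻¹ • ((inner ℂ (P n) (φ i) : ℂ) • P n))) : ℂ)‖}
      (2 * Real.sqrt ((inner ℂ n (n - P n) : ℂ).re)) := by
  have hP : IsStarProjection P := ⟨h_idem, h_sa⟩
  have hnPn : ⟪n, P n⟫_ℂ = (‖P n‖ ^ 2 : ℝ) := hP.inner_apply_eq_norm_sq n
  have hnQn : ⟪n, n - P n⟫_ℂ = (‖n - P n‖ ^ 2 : ℝ) := by
    simpa using hP.one_sub.inner_apply_eq_norm_sq n
  have hPn : P n ≠ 0 := by
    rintro h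
    simp [h] at h_pos
  have key := isLUB_absDiagonalSums_sub_normalized_component (hP.inner_apply_sub_self_eq_zero n)
    (by rwa [add_sub_cancel]) hPn
  rw [add_sub_cancel, ← hnPn] at key
  rwa [hnQn, Complex.ofReal_re, Real.sqrt_sq (norm_nonneg _)]
end
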